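/- Let (G, E, φ) be a self-similar graph, g ∈ G, and let M_g be the set of minimal strongly fixed paths for g. Then the set of all paths strongly fixed by g is the disjoint union over μ ∈ M_g of the sets {μγ : γ ∈ E*, d(μ) = r(γ)}; that is, every path of the form μγ with μ ∈ M_g and d(μ) = r(γ) is strongly fixed by g, and every path strongly fixed by g can be written as μγ with μ ∈ M_g for exactly one μ ∈ M_g. -/

import Mathlib

/-- Finite paths in a directed graph: `Pth.nil x` is the length-zero path at the
vertex `x`, and `Pth.cons e p` is the path whose first edge is `e`, followed by `p`. -/
inductive Pth (V : Type) (Ed : Type) : Type where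
  | nil : V → Pth V Ed
  | cons : Ed → Pth V Ed → Pth V Ed

/-- A self-similar graph `(G, E, φ)`: a group `G` acting on a directed graph `E`
(with vertex set `V`, edge set `Ed`, range `r` and source `d`) by graph
automorphisms, together with a one-cocycle `φ : G × E¹ → G` for the action on
edges, satisfying `φ(g,e)·x = g·x` for all vertices `x`. -/
structure SelfSimGraph (G V Ed : Type) [Group G] : Type where
  r : Ed → V
  d : Ed → V
  actV : G → V → V
  actE : G → Ed → Ed
  actV_one : ∀ x, actV 1 x = x
  actV_mul : ∀ g h x, actV (g * h) x = actV g (actV h x)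
  actE_one : ∀ e, actE 1 e = e
  actE_mul : ∀ g h e, actE (g * h) e = actE g (actE h e)
  r_act : ∀ g e, r (actE g e) = actV g (r e)
  d_act : ∀ g e, d (actE g e) = actV g (d e)
  phi : G → Ed → G
  phi_cocycle : ∀ g h e, phi (g * h) e = phi g (actE h e) * phi h e
  phi_vertex : ∀ g e x, actV (phi g e) x = actV g x

variable {G V Ed : Type} [Group G]

/-- The range `r(α)` of a finite path. -/
def rngP (S : SelfSimGraph G V Ed) : Pth V Ed → V
  | Pth.nil x => x
  | Pth.cons e _ => S.r e

/-- The source `d(α)` of a finite path. -/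
def srcP (S : SelfSimGraph G V Ed) : Pth V Ed → V
  | Pth.nil x => x
  | Pth.cons _ p => srcP S p

/-- Well-formedness of a finite path: consecutive edges match, `d(αᵢ) = r(αᵢ₊₁)`. -/
def WFP (S : SelfSimGraph G V Ed) : Pth V Ed → Prop
  | Pth.nil _ => True
  | Pth.cons e p => S.d e = rngP S p ∧ WFP S p

/-- The length of a finite path. -/
def lenP : Pth V Ed → ℕ
  | Pth.nil _ => 0
  | Pth.cons _ p => lenP p + 1

/-- Concatenation `αβ` of finite paths (meaningful when `d(α) = r(β)`). -/
def compP : Pth V Ed → Pth V Ed → Pth V Ed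
  | Pth.nil _, q => q
  | Pth.cons e p, q => Pth.cons e (compP p q)

/-- The action of `G` extended to finite paths:
`g·x = g·x` on vertices and `g·(eα) = (g·e)(φ(g,e)·α)`. -/
def actP (S : SelfSimGraph G V Ed) : G → Pth V Ed → Pth V Ed
  | g, Pth.nil x => Pth.nil (S.actV g x)
  | g, Pth.cons e p => Pth.cons (S.actE g e) (actP S (S.phi g e) p)

/-- The cocycle extended to finite paths:
`φ(g,x) = g` on vertices and `φ(g, eα) = φ(φ(g,e), α)`. -/
def phiP (S : SelfSimGraph G V Ed) : G → Pth V Ed → G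
  | g, Pth.nil _ => g
  | g, Pth.cons e p => phiP S (S.phi g e) p

/-- A path `τ` is strongly fixed by `g` if `g·τ = τ` and `φ(g,τ) = 1`. -/
def StronglyFixed (S : SelfSimGraph G V Ed) (g : G) (τ : Pth V Ed) : Prop :=
  WFP S τ ∧ actP S g τ = τ ∧ phiP S g τ = 1

/-- `(G,E,φ)` is pseudo free if `g·e = e` and `φ(g,e) = 1` imply `g = 1`. -/
def PseudoFree (S : SelfSimGraph G V Ed) : Prop :=
  ∀ (g : G) (e : Ed), S.actE g e = e → S.phi g e = 1 → g = 1

/-- `p` is a prefix (initial segment) of `q`: `q = pε` for some path `ε`. -/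
def IsPrefixP (S : SelfSimGraph G V Ed) (p q : Pth V Ed) : Prop :=
  ∃ ε, WFP S ε ∧ rngP S ε = srcP S p ∧ compP p ε = q

/-- The set `M_g` of minimal strongly fixed paths for `g`: strongly fixed paths
none of whose proper prefixes is strongly fixed. -/
def MinSF (S : SelfSimGraph G V Ed) (g : G) : Set (Pth V Ed) :=
  {μ | StronglyFixed S g μ ∧ ∀ p, IsPrefixP S p μ → p ≠ μ → ¬StronglyFixed S g p}

/-- Well-formedness of an infinite path, viewed as a sequence of edges:
`d(ξᵢ) = r(ξᵢ₊₁)`. -/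
def InfWF (S : SelfSimGraph G V Ed) (ξ : ℕ → Ed) : Prop :=
  ∀ i, S.d (ξ i) = S.r (ξ (i + 1))

/-- The range `r(ξ)` of an infinite path. -/
def rngInf (S : SelfSimGraph G V Ed) (ξ : ℕ → Ed) : V := S.r (ξ 0)

/-- `takeP S ξ n` is the finite path `ξ|ₙ = ξ₁⋯ξₙ` (with `ξ|₀ = r(ξ₁)`). -/
def takeP (S : SelfSimGraph G V Ed) : (ℕ → Ed) → ℕ → Pth V Ed
  | ξ, 0 => Pth.nil (S.r (ξ 0))
  | ξ, n + 1 => Pth.cons (ξ 0) (takeP S (fun i => ξ (i + 1)) n)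

/-- Membership of an infinite path in the cylinder `Z(α)`:
the initial segment of `ξ` of length `|α|` equals `α`. -/
def InZ (S : SelfSimGraph G V Ed) (α : Pth V Ed) (ξ : ℕ → Ed) : Prop :=
  takeP S ξ (lenP α) = α

/-- The infinite path `αξ` obtained by prepending a finite path to an infinite one. -/
def prepSeq : Pth V Ed → (ℕ → Ed) → ℕ → Ed
  | Pth.nil _, ξ, n => ξ n
  | Pth.cons e _, _, 0 => e
  | Pth.cons _ p, ξ, n + 1 => prepSeq p ξ n

/-- Dropping the first `k` edges of an infinite path. -/
def dropSeq (k : ℕ) (ξ : ℕ → Ed) : ℕ → Ed := fun n => ξ (n + k)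

/-- The space `E^∞` of infinite paths. -/
def InfPath (S : SelfSimGraph G V Ed) : Type := {ξ : ℕ → Ed // InfWF S ξ}

/-- The topology of `E^∞`: the subspace topology induced from the product
topology on `(E¹)^ℕ`, `E¹` being discrete.  Its basis consists of the
cylinders `Z(α)`. -/
def infTop (S : SelfSimGraph G V Ed) : TopologicalSpace (InfPath S) :=
  TopologicalSpace.induced (fun ξ => ξ.1)
    (@Pi.topologicalSpace ℕ (fun _ => Ed) (fun _ => ⊥))

/-- Specification of the (unique) action of `G` on `E^∞`: `(g·ξ)|ₙ = g·(ξ|ₙ)`. -/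
def ActSpec (S : SelfSimGraph G V Ed) (act : G → (ℕ → Ed) → ℕ → Ed) : Prop :=
  ∀ (g : G) (ξ : ℕ → Ed) (n : ℕ), takeP S (act g ξ) n = actP S g (takeP S ξ n)

/-- The action of a triple `s = (α, g, β) ∈ S_{G,E}` on `E^∞`: it sends
`βξ ∈ Z(β)` to `α(g·ξ)`. -/
def sActSeq (S : SelfSimGraph G V Ed) (act : G → (ℕ → Ed) → ℕ → Ed)
    (α : Pth V Ed) (g : G) (β : Pth V Ed) (ξ : ℕ → Ed) : ℕ → Ed :=
  prepSeq α (act g (dropSeq (lenP β) ξ))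

/-- The set of fixed points in `E^∞` of the element `s = (α, g, β)` of `S_{G,E}`. -/
def FixSet (S : SelfSimGraph G V Ed) (act : G → (ℕ → Ed) → ℕ → Ed)
    (α : Pth V Ed) (g : G) (β : Pth V Ed) : Set (InfPath S) :=
  {η | InZ S β η.1 ∧ sActSeq S act α g β η.1 = η.1}

/-- A vertex `x` is simple if `r⁻¹(x)` is a singleton. -/
def SimpleVtx (S : SelfSimGraph G V Ed) (x : V) : Prop := ∃! e : Ed, S.r e = x

/-- A path `γ = γ₁⋯γₙ` has no entry if `d(γᵢ)` is simple for every `i`. -/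
def NoEntry (S : SelfSimGraph G V Ed) : Pth V Ed → Prop
  | Pth.nil _ => True
  | Pth.cons e p => SimpleVtx S (S.d e) ∧ NoEntry S p

/-- A circuit: a path `γ` of nonzero length with `d(γ) = r(γ)`. -/
def Circuit (S : SelfSimGraph G V Ed) (γ : Pth V Ed) : Prop :=
  WFP S γ ∧ 1 ≤ lenP γ ∧ srcP S γ = rngP S γ

/-- A `G`-circuit: a pair `(g,γ)` with `γ` of nonzero length and `d(γ) = g·r(γ)`. -/
def GCircuit (S : SelfSimGraph G V Ed) (g : G) (γ : Pth V Ed) : Prop :=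
  WFP S γ ∧ 1 ≤ lenP γ ∧ srcP S γ = S.actV g (rngP S γ)

/-- `g` is slack at `x` if all sufficiently long paths with range `x` are
strongly fixed by `g`. -/
def SlackAt (S : SelfSimGraph G V Ed) (g : G) (x : V) : Prop :=
  ∃ n : ℕ, ∀ γ, WFP S γ → rngP S γ = x → n ≤ lenP γ → StronglyFixed S g γ

/-- The sequence `(γⁿ, gₙ)` attached to a `G`-circuit `(g, γ)`:
`γ¹ = γ`, `g₁ = g`, `γⁿ⁺¹ = gₙ·γⁿ`, `gₙ₊₁ = φ(gₙ, γⁿ)` (indexed from `0`). -/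
def circIter (S : SelfSimGraph G V Ed) (g : G) (γ : Pth V Ed) : ℕ → Pth V Ed × G
  | 0 => (γ, g)
  | n + 1 =>
      (actP S (circIter S g γ n).2 (circIter S g γ n).1,
       phiP S (circIter S g γ n).2 (circIter S g γ n).1)

/-- The finite concatenation `γ¹γ²⋯γⁿ`. -/
def circConcat (S : SelfSimGraph G V Ed) (g : G) (γ : Pth V Ed) : ℕ → Pth V Ed
  | 0 => Pth.nil (rngP S γ)
  | n + 1 => compP (circConcat S g γ n) (circIter S g γ n).1

/-- `ξ` is the infinite concatenation `ξ(g,γ) = γ¹γ²γ³⋯`: it is an infinite path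
whose initial segments are the finite concatenations `γ¹⋯γⁿ`. -/
def IsCircPath (S : SelfSimGraph G V Ed) (g : G) (γ : Pth V Ed) (ξ : ℕ → Ed) : Prop :=
  InfWF S ξ ∧ ∀ n, takeP S ξ (lenP (circConcat S g γ n)) = circConcat S g γ n

/-- `x ⇀ y`: there is a finite path with source `x` and range `y`. -/
def RelPath (S : SelfSimGraph G V Ed) (x y : V) : Prop :=
  ∃ α, WFP S α ∧ srcP S α = x ∧ rngP S α = y

/-- `x ∼ y`: `x` and `y` are in the same `G`-orbit. -/
def RelOrb (S : SelfSimGraph G V Ed) (x y : V) : Prop :=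
  ∃ g : G, S.actV g x = y

/-- `x ≫ y`: there is a vertex `u` with `x ⇀ u ∼ y`. -/
def RelGG (S : SelfSimGraph G V Ed) (x y : V) : Prop :=
  ∃ u, RelPath S x u ∧ RelOrb S u y

/-- A nonzero element `(α, g, β)` of `S_{G,E}`: `α, β ∈ E*`, `g ∈ G`, with
`d(α) = g·d(β)`. -/
def SGETriple (S : SelfSimGraph G V Ed) : Type :=
  {t : Pth V Ed × G × Pth V Ed //
    WFP S t.1 ∧ WFP S t.2.2 ∧ srcP S t.1 = S.actV t.2.1 (srcP S t.2.2)}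

/-- The inverse semigroup `S_{G,E}` (as a set): the triples together with `0 = none`. -/
def SGE (S : SelfSimGraph G V Ed) : Type := Option (SGETriple S)

/-- Forget the membership proofs. -/
def sgeToRaw (S : SelfSimGraph G V Ed) : SGE S → Option (Pth V Ed × G × Pth V Ed) :=
  Option.map Subtype.val

/-- The adjoint: `(α, g, β)* = (β, g⁻¹, α)`, `0* = 0`. -/
def starSGE (S : SelfSimGraph G V Ed) : SGE S → SGE S
  | none => none
  | some s =>
      some ⟨(s.1.2.2, s.1.2.1⁻¹, s.1.1),
        ⟨s.2.2.1, s.2.1, by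
          rw [s.2.2.2, ← S.actV_mul, inv_mul_cancel, S.actV_one]⟩⟩

/-- The idempotent `f_α = (α, 1, α)`. -/
def fIdem (S : SelfSimGraph G V Ed) (α : Pth V Ed) (h : WFP S α) : SGE S :=
  some ⟨(α, 1, α), ⟨h, h, by rw [S.actV_one]⟩⟩

/-- Specification of the multiplication of `S_{G,E}`:
`0` is absorbing; `(α,g,β)(γ,h,δ) = (α(g·ε), φ(g,ε)h, δ)` if `γ = βε`;
`(α,g,β)(γ,h,δ) = (α, gφ(h⁻¹,ε)⁻¹, δ(h⁻¹·ε))` if `β = γε`; `0` otherwise. -/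
def MulSpec (S : SelfSimGraph G V Ed) (mul : SGE S → SGE S → SGE S) : Prop :=
  (∀ t, mul none t = none) ∧
  (∀ s, mul s none = none) ∧
  (∀ (s t : SGETriple S) (ε : Pth V Ed),
     WFP S ε → rngP S ε = srcP S s.1.2.2 → t.1.1 = compP s.1.2.2 ε →
       sgeToRaw S (mul (some s) (some t)) =
         some (compP s.1.1 (actP S s.1.2.1 ε), phiP S s.1.2.1 ε * t.1.2.1, t.1.2.2)) ∧
  (∀ (s t : SGETriple S) (ε : Pth V Ed),
     WFP S ε → rngP S ε = srcP S t.1.1 → s.1.2.2 = compP t.1.1 ε →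
       sgeToRaw S (mul (some s) (some t)) =
         some (s.1.1, s.1.2.1 * (phiP S t.1.2.1⁻¹ ε)⁻¹,
               compP t.1.2.2 (actP S t.1.2.1⁻¹ ε))) ∧
  (∀ (s t : SGETriple S),
     (¬∃ ε, WFP S ε ∧ rngP S ε = srcP S s.1.2.2 ∧ t.1.1 = compP s.1.2.2 ε) →
     (¬∃ ε, WFP S ε ∧ rngP S ε = srcP S t.1.1 ∧ s.1.2.2 = compP t.1.1 ε) →
       mul (some s) (some t) = none)

/-- Topological freeness of the standard action of `S_{G,E}` on `E^∞`: for every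
nonzero `s = (α, g, β)`, every interior fixed point `ζ` of `s` satisfies `α = β`
and `ζ ∈ Z(ατ)` for some `τ` strongly fixed by `g`. -/
def TopFree (S : SelfSimGraph G V Ed) (act : G → (ℕ → Ed) → ℕ → Ed) : Prop :=
  ∀ (α : Pth V Ed) (g : G) (β : Pth V Ed),
    WFP S α → WFP S β → srcP S α = S.actV g (srcP S β) →
    ∀ ζ : InfPath S, ζ ∈ @interior (InfPath S) (infTop S) (FixSet S act α g β) →
      α = β ∧ ∃ τ : Pth V Ed, WFP S τ ∧ rngP S τ = srcP S α ∧
        StronglyFixed S g τ ∧ InZ S (compP α τ) ζ.1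

/-!
The action and the cocycle on a concatenation split as `g·(μγ) = (g·μ)(φ(g,μ)·γ)` and
`φ(g,μγ) = φ(φ(g,μ),γ)`, so once `g·μ = μ` and `φ(g,μ) = 1` every extension `μγ` is strongly
fixed. Conversely, the prefixes of a path form a chain: a shortest strongly fixed prefix of a
strongly fixed path is minimal, and two minimal strongly fixed prefixes of the same path are
comparable, hence equal.
-/

section SelfSimGraph

variable (S : SelfSimGraph G V Ed)

lemma srcP_compP (p q : Pth V Ed) : srcP S (compP p q) = srcP S q := by
  induction p with
  | nil x => rfl
  | cons e p ih => exact ih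

lemma rngP_compP (p q : Pth V Ed) (h : rngP S q = srcP S p) :
    rngP S (compP p q) = rngP S p := by
  cases p with
  | nil x => exact h
  | cons e p => rfl

lemma lenP_compP (p q : Pth V Ed) : lenP (compP p q) = lenP p + lenP q := by
  induction p with
  | nil x => simp [compP, lenP]
  | cons e p ih => simp only [compP, lenP, ih]; omega

lemma compP_assoc (p q r : Pth V Ed) :
    compP (compP p q) r = compP p (compP q r) := by
  induction p with
  | nil x => rfl
  | cons e p ih => simp [compP, ih]

lemma compP_nil_srcP (p : Pth V Ed) : compP p (Pth.nil (srcP S p)) = p := by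
  induction p with
  | nil x => rfl
  | cons e p ih => simpa [compP, srcP] using ih

lemma eq_nil_of_lenP_eq_zero {p : Pth V Ed} (h : lenP p = 0) : p = Pth.nil (rngP S p) := by
  cases p with
  | nil x => rfl
  | cons e p => simp [lenP] at h

variable {S}

lemma WFP.of_compP {p q : Pth V Ed} (h : WFP S (compP p q)) (hr : rngP S q = srcP S p) :
    WFP S p := by
  induction p with
  | nil x => trivial
  | cons e p ih => exact ⟨h.1.trans (rngP_compP S p q hr), ih h.2 hr⟩

lemma WFP.compP {p q : Pth V Ed} (hp : WFP S p) (hq : WFP S q) (h : rngP S q = srcP S p) :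
    WFP S (compP p q) := by
  induction p with
  | nil x => exact hq
  | cons e p ih => exact ⟨hp.1.trans (rngP_compP S p q h).symm, ih hp.2 h⟩

variable (S)

lemma phi_one (e : Ed) : S.phi 1 e = 1 := by
  have h := S.phi_cocycle 1 1 e
  rw [one_mul, S.actE_one] at h
  exact right_eq_mul.mp h

lemma actP_one (p : Pth V Ed) : actP S 1 p = p := by
  induction p with
  | nil x => simp [actP, S.actV_one]
  | cons e p ih => simp [actP, S.actE_one, phi_one, ih]

lemma phiP_one (p : Pth V Ed) : phiP S 1 p = 1 := by
  induction p with
  | nil x => rfl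
  | cons e p ih => simp [phiP, phi_one, ih]

lemma actP_compP (g : G) (p q : Pth V Ed) :
    actP S g (compP p q) = compP (actP S g p) (actP S (phiP S g p) q) := by
  induction p generalizing g with
  | nil x => rfl
  | cons e p ih => simp [compP, actP, phiP, ih]

lemma phiP_compP (g : G) (p q : Pth V Ed) :
    phiP S g (compP p q) = phiP S (phiP S g p) q := by
  induction p generalizing g with
  | nil x => rfl
  | cons e p ih => simp [compP, phiP, ih]

variable {S}

lemma StronglyFixed.compP {g : G} {μ γ : Pth V Ed} (hμ : StronglyFixed S g μ)
    (hγ : WFP S γ) (hr : rngP S γ = srcP S μ) : StronglyFixed S g (compP μ γ) := by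
  obtain ⟨hw, hact, hphi⟩ := hμ
  refine ⟨hw.compP hγ hr, ?_, ?_⟩
  · rw [actP_compP, hact, hphi, actP_one]
  · rw [phiP_compP, hphi, phiP_one]

lemma IsPrefixP.refl (p : Pth V Ed) : IsPrefixP S p p :=
  ⟨Pth.nil (srcP S p), trivial, rfl, compP_nil_srcP S p⟩

lemma IsPrefixP.trans {p q r : Pth V Ed} (hpq : IsPrefixP S p q) (hqr : IsPrefixP S q r) :
    IsPrefixP S p r := by
  obtain ⟨ε, hε, hεr, rfl⟩ := hpq
  obtain ⟨δ, hδ, hδr, rfl⟩ := hqr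
  have hδε : rngP S δ = srcP S ε := by rw [hδr, srcP_compP]
  exact ⟨compP ε δ, hε.compP hδ hδε, (rngP_compP S ε δ hδε).trans hεr,
    (compP_assoc p ε δ).symm⟩

lemma IsPrefixP.cons {p q : Pth V Ed} (e : Ed) (h : IsPrefixP S p q) :
    IsPrefixP S (Pth.cons e p) (Pth.cons e q) := by
  obtain ⟨ε, hε, hεr, rfl⟩ := h
  exact ⟨ε, hε, hεr, rfl⟩

lemma IsPrefixP.lenP_lt {p q : Pth V Ed} (h : IsPrefixP S p q) (hne : p ≠ q) :
    lenP p < lenP q := by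
  obtain ⟨ε, -, hεr, rfl⟩ := h
  rw [lenP_compP]
  refine Nat.lt_add_of_pos_right (Nat.pos_of_ne_zero fun hε => hne ?_)
  rw [eq_nil_of_lenP_eq_zero S hε, hεr, compP_nil_srcP]

lemma IsPrefixP.nil_of_isPrefixP {x : V} {q r : Pth V Ed} (hx : IsPrefixP S (Pth.nil x) r)
    (hq : IsPrefixP S q r) : IsPrefixP S (Pth.nil x) q := by
  obtain ⟨r, hr, rfl, rfl⟩ := hx
  obtain ⟨ε, -, hεr, rfl⟩ := hq
  exact ⟨q, hr.of_compP hεr, (rngP_compP S q ε hεr).symm, rfl⟩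

lemma IsPrefixP.total {p q r : Pth V Ed} (hp : IsPrefixP S p r) (hq : IsPrefixP S q r) :
    IsPrefixP S p q ∨ IsPrefixP S q p := by
  induction p generalizing q r with
  | nil x => exact Or.inl (hp.nil_of_isPrefixP hq)
  | cons e p ih =>
    cases q with
    | nil y => exact Or.inr (hq.nil_of_isPrefixP hp)
    | cons f q =>
      obtain ⟨ε, hε, hεr, rfl⟩ := hp
      obtain ⟨δ, hδ, hδr, hqp⟩ := hq
      obtain ⟨rfl, htail⟩ : f = e ∧ compP q δ = compP p ε := Pth.cons.inj hqp
      exact (ih (q := q) ⟨ε, hε, hεr, rfl⟩ ⟨δ, hδ, hδr, htail⟩).imp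
        (IsPrefixP.cons f) (IsPrefixP.cons f)

lemma eq_of_mem_minSF_of_isPrefixP {g : G} {μ ν : Pth V Ed} (hμ : μ ∈ MinSF S g)
    (hν : StronglyFixed S g ν) (h : IsPrefixP S ν μ) : ν = μ := by
  by_contra hne
  exact hμ.2 ν h hne hν

lemma exists_mem_minSF_isPrefixP {g : G} {α : Pth V Ed} (hα : StronglyFixed S g α) :
    ∃ μ ∈ MinSF S g, IsPrefixP S μ α := by
  obtain ⟨μ, ⟨hμα, hμ⟩, hmin⟩ := (measure (lenP (V := V) (Ed := Ed))).wf.has_min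
    {p | IsPrefixP S p α ∧ StronglyFixed S g p} ⟨α, IsPrefixP.refl α, hα⟩
  exact ⟨μ, ⟨hμ, fun p hpμ hne hp => hmin p ⟨hpμ.trans hμα, hp⟩ (hpμ.lenP_lt hne)⟩, hμα⟩

end SelfSimGraph

theorem statement3_general {G V Ed : Type} [Group G]
    (S : SelfSimGraph G V Ed)
    (g : G) :
    (∀ μ ∈ MinSF S g, ∀ γ : Pth V Ed, WFP S γ → rngP S γ = srcP S μ →
        StronglyFixed S g (compP μ γ)) ∧
    (∀ α : Pth V Ed, StronglyFixed S g α →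
        ∃! μ : Pth V Ed, μ ∈ MinSF S g ∧ IsPrefixP S μ α) := by
  refine ⟨fun μ hμ γ hγ hr => hμ.1.compP hγ hr, fun α hα => ?_⟩
  obtain ⟨μ, hμ, hμα⟩ := exists_mem_minSF_isPrefixP hα
  refine ⟨μ, ⟨hμ, hμα⟩, fun ν ⟨hν, hνα⟩ => ?_⟩
  rcases hνα.total hμα with hνμ | hμν
  · exact eq_of_mem_minSF_of_isPrefixP hμ hν.1 hνμ
  · exact (eq_of_mem_minSF_of_isPrefixP hν hμ.1 hμν).symm

/-- The set of strongly fixed paths for `g` is the disjoint union, over the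
minimal strongly fixed paths `μ ∈ M_g`, of the sets `{μγ : d(μ) = r(γ)}`:
every `μγ` with `μ ∈ M_g` is strongly fixed, and every strongly fixed path has
exactly one prefix in `M_g`. -/
theorem statement3 {G V Ed : Type} [Group G] [Fintype V] [Fintype Ed]
    (S : SelfSimGraph G V Ed) (hNoSources : ∀ x : V, ∃ e : Ed, S.r e = x)
    (g : G) :
    (∀ μ ∈ MinSF S g, ∀ γ : Pth V Ed, WFP S γ → rngP S γ = srcP S μ →
        StronglyFixed S g (compP μ γ)) ∧
    (∀ α : Pth V Ed, StronglyFixed S g α →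
        ∃! μ : Pth V Ed, μ ∈ MinSF S g ∧ IsPrefixP S μ α) :=
  statement3_general S g
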